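/- (Poincaré–Miranda in dimension 2, used to justify the multidimensional bisection) Let f, g : [a₁,a₂]×[b₁,b₂] → R be continuous, with f(a₁,y) ≤ 0 ≤ f(a₂,y) for all y ∈ [b₁,b₂] and g(x,b₁) ≤ 0 ≤ g(x,b₂) for all x ∈ [a₁,a₂]. Then there exists (x*,y*) in the rectangle with f(x*,y*) = 0 and g(x*,y*) = 0. -/

import Mathlib

/-!
Label each point of the rectangle `1` where `f ≥ 0`, else `2` where `g ≥ 0`, else `0`. The
boundary signs make the labelling of a fine grid behave like that of Sperner's lemma: the oriented
number of `0 → 1` edges around the boundary is `1`, and by discrete Stokes it is the sum of the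
same circulations around the grid cells, so some cell carries all three labels. At a corner of
that cell `f` and `g` are uniformly small, and a minimiser of `‖(f, g)‖` on the compact rectangle
is a common zero.
-/

open Set

/-- The oriented doors of Sperner's lemma: edges labelled `0 → 1` count `+1`, edges `1 → 0`
count `-1`. -/
def door (a b : Fin 3) : ℤ :=
  if a = 0 ∧ b = 1 then 1 else if a = 1 ∧ b = 0 then -1 else 0

lemma door_of_ne_zero : ∀ a b : Fin 3, a ≠ 0 → b ≠ 0 → door a b = 0 := by decide

lemma door_of_ne_one : ∀ a b : Fin 3, a ≠ 1 → b ≠ 1 → door a b = 0 := by decide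

lemma door_of_ne_two : ∀ a b : Fin 3, a ≠ 2 → b ≠ 2 →
    door a b = (if b = 1 then 1 else 0) - (if a = 1 then 1 else 0) := by decide

lemma forall_eq_or_of_door_circulation_ne_zero : ∀ a b c d : Fin 3,
    door a b + door b d - door c d - door a c ≠ 0 → ∀ k, a = k ∨ b = k ∨ c = k ∨ d = k := by
  decide

theorem Finset.sum_range_sum_range_circulation {M : Type*} [AddCommGroup M]
    (h v : ℕ → ℕ → M) (m n : ℕ) :
    ∑ i ∈ range m, ∑ j ∈ range n, (h i j + v (i + 1) j - h i (j + 1) - v i j) =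
      ∑ i ∈ range m, (h i 0 - h i n) + ∑ j ∈ range n, (v m j - v 0 j) := by
  have hsplit : ∀ i j, h i j + v (i + 1) j - h i (j + 1) - v i j =
      (h i j - h i (j + 1)) + (v (i + 1) j - v i j) := fun i j => by abel
  simp only [hsplit, sum_add_distrib, sum_range_sub']
  rw [sum_comm, sum_congr rfl fun j _ => sum_range_sub (fun i => v i j) m]

theorem exists_trichromatic_cell (m n : ℕ) (ℓ : ℕ → ℕ → Fin 3)
    (hL : ∀ j ≤ n, ℓ 0 j ≠ 1) (hR : ∀ j ≤ n, ℓ m j = 1)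
    (hB : ∀ i ≤ m, ℓ i 0 ≠ 2) (hT : ∀ i ≤ m, ℓ i n ≠ 0) :
    ∃ i < m, ∃ j < n, ∀ k, ∃ i' ∈ Icc i (i + 1), ∃ j' ∈ Icc j (j + 1), ℓ i' j' = k := by
  set h : ℕ → ℕ → ℤ := fun i j => door (ℓ i j) (ℓ (i + 1) j)
  set v : ℕ → ℕ → ℤ := fun i j => door (ℓ i j) (ℓ i (j + 1))
  have hbottom : ∑ i ∈ Finset.range m, h i 0 = 1 := by
    rw [Finset.sum_congr rfl fun i hi => door_of_ne_two _ _
      (hB i (Finset.mem_range.1 hi).le) (hB (i + 1) (Finset.mem_range.1 hi)),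
      Finset.sum_range_sub (fun i => if ℓ i 0 = 1 then (1 : ℤ) else 0),
      if_pos (hR 0 (Nat.zero_le n)), if_neg (hL 0 (Nat.zero_le n)), sub_zero]
  have htop : ∀ i ∈ Finset.range m, h i n = 0 := fun i hi => door_of_ne_zero _ _
    (hT i (Finset.mem_range.1 hi).le) (hT (i + 1) (Finset.mem_range.1 hi))
  have hleft : ∀ j ∈ Finset.range n, v 0 j = 0 := fun j hj => door_of_ne_one _ _
    (hL j (Finset.mem_range.1 hj).le) (hL (j + 1) (Finset.mem_range.1 hj))
  have hright : ∀ j ∈ Finset.range n, v m j = 0 := fun j hj => door_of_ne_zero _ _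
    (by rw [hR j (Finset.mem_range.1 hj).le]; decide)
    (by rw [hR (j + 1) (Finset.mem_range.1 hj)]; decide)
  have htotal : ∑ i ∈ Finset.range m, ∑ j ∈ Finset.range n,
      (h i j + v (i + 1) j - h i (j + 1) - v i j) = 1 := by
    rw [Finset.sum_range_sum_range_circulation, Finset.sum_sub_distrib, Finset.sum_sub_distrib,
      Finset.sum_eq_zero htop, Finset.sum_eq_zero hleft, Finset.sum_eq_zero hright, hbottom]
    simp
  obtain ⟨i, hi, hrow⟩ := Finset.exists_ne_zero_of_sum_ne_zero (htotal ▸ one_ne_zero)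
  obtain ⟨j, hj, hcell⟩ := Finset.exists_ne_zero_of_sum_ne_zero hrow
  refine ⟨i, Finset.mem_range.1 hi, j, Finset.mem_range.1 hj, fun k => ?_⟩
  rcases forall_eq_or_of_door_circulation_ne_zero _ _ _ _ hcell k with hk | hk | hk | hk
  · exact ⟨i, by simp, j, by simp, hk⟩
  · exact ⟨i + 1, by simp, j, by simp, hk⟩
  · exact ⟨i, by simp, j + 1, by simp, hk⟩
  · exact ⟨i + 1, by simp, j + 1, by simp, hk⟩

noncomputable def gridPoint (a b : ℝ) (n i : ℕ) : ℝ := AffineMap.lineMap a b ((i : ℝ) / n)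

@[simp] lemma gridPoint_zero (a b : ℝ) (n : ℕ) : gridPoint a b n 0 = a := by
  simp [gridPoint]

lemma gridPoint_self (a b : ℝ) {n : ℕ} (hn : n ≠ 0) : gridPoint a b n n = b := by
  simp [gridPoint, hn]

lemma gridPoint_mem_Icc {a b : ℝ} (hab : a ≤ b) {n i : ℕ} (hi : i ≤ n) :
    gridPoint a b n i ∈ Icc a b :=
  (convex_Icc a b).lineMap_mem (left_mem_Icc.2 hab) (right_mem_Icc.2 hab)
    ⟨by positivity, div_le_one_of_le₀ (by exact_mod_cast hi) (Nat.cast_nonneg n)⟩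

lemma dist_gridPoint_le (a b : ℝ) (n : ℕ) {k i i' : ℕ} (hi : i ∈ Icc k (k + 1))
    (hi' : i' ∈ Icc k (k + 1)) : dist (gridPoint a b n i) (gridPoint a b n i') ≤ dist a b / n := by
  have hii : |(i : ℝ) - i'| ≤ 1 := by
    simp only [mem_Icc] at hi hi'
    rw [abs_sub_le_iff, sub_le_iff_le_add, sub_le_iff_le_add]
    norm_cast
    constructor <;> omega
  rw [gridPoint, gridPoint, dist_lineMap_lineMap]
  calc dist ((i : ℝ) / n) (i' / n) * dist a b = |(i : ℝ) - i'| / n * dist a b := by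
        rw [Real.dist_eq, ← sub_div, abs_div, Nat.abs_cast]
    _ ≤ 1 / n * dist a b := by gcongr
    _ = dist a b / n := by ring

section Labelling

variable {f g : ℝ × ℝ → ℝ} {a₁ a₂ b₁ b₂ : ℝ}

/-- Keeping the left edge out of label `1` and the bottom edge out of label `2` is what lets the
non-strict boundary signs suffice. -/
noncomputable def mirandaLabel (f g : ℝ × ℝ → ℝ) (a₁ b₁ : ℝ) (p : ℝ × ℝ) : Fin 3 :=
  if p.1 ≠ a₁ ∧ 0 ≤ f p then 1 else if p.2 ≠ b₁ ∧ 0 ≤ g p then 2 else 0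

lemma nonneg_of_mirandaLabel_eq_one {p : ℝ × ℝ} (h : mirandaLabel f g a₁ b₁ p = 1) : 0 ≤ f p := by
  unfold mirandaLabel at h
  split_ifs at h with h₁ h₂ <;> first | exact h₁.2 | exact absurd h (by decide)

lemma nonpos_nonneg_of_mirandaLabel_eq_two (hf1 : ∀ y ∈ Icc b₁ b₂, f (a₁, y) ≤ 0) {x y : ℝ}
    (hy : y ∈ Icc b₁ b₂) (h : mirandaLabel f g a₁ b₁ (x, y) = 2) : f (x, y) ≤ 0 ∧ 0 ≤ g (x, y) := by
  unfold mirandaLabel at h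
  split_ifs at h with h₁ h₂
  · exact absurd h (by decide)
  · refine ⟨?_, h₂.2⟩
    by_cases hx : x = a₁
    · exact hx ▸ hf1 y hy
    · exact le_of_lt (not_le.1 fun hf => h₁ ⟨hx, hf⟩)
  · exact absurd h (by decide)

lemma nonpos_of_mirandaLabel_eq_zero (hg1 : ∀ x ∈ Icc a₁ a₂, g (x, b₁) ≤ 0) {x y : ℝ}
    (hx : x ∈ Icc a₁ a₂) (h : mirandaLabel f g a₁ b₁ (x, y) = 0) : g (x, y) ≤ 0 := by
  unfold mirandaLabel at h
  split_ifs at h with h₁ h₂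
  · exact absurd h (by decide)
  · exact absurd h (by decide)
  · by_cases hy : y = b₁
    · exact hy ▸ hg1 x hx
    · exact le_of_lt (not_le.1 fun hg => h₂ ⟨hy, hg⟩)

lemma mirandaLabel_left_ne_one (y : ℝ) : mirandaLabel f g a₁ b₁ (a₁, y) ≠ 1 := by
  unfold mirandaLabel
  split_ifs with h₁ <;> simp_all

lemma mirandaLabel_right_eq_one (ha : a₁ < a₂) (hf2 : ∀ y ∈ Icc b₁ b₂, 0 ≤ f (a₂, y)) {y : ℝ}
    (hy : y ∈ Icc b₁ b₂) : mirandaLabel f g a₁ b₁ (a₂, y) = 1 :=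
  if_pos ⟨ha.ne', hf2 y hy⟩

lemma mirandaLabel_bottom_ne_two (x : ℝ) : mirandaLabel f g a₁ b₁ (x, b₁) ≠ 2 := by
  unfold mirandaLabel
  split_ifs with h₁ <;> simp_all

lemma mirandaLabel_top_ne_zero (hb : b₁ < b₂) (hg2 : ∀ x ∈ Icc a₁ a₂, 0 ≤ g (x, b₂)) {x : ℝ}
    (hx : x ∈ Icc a₁ a₂) : mirandaLabel f g a₁ b₁ (x, b₂) ≠ 0 := by
  unfold mirandaLabel
  split_ifs with h₁ h₂
  exacts [by decide, by decide, absurd ⟨hb.ne', hg2 x hx⟩ h₂]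

end Labelling

theorem exists_small_trichromatic {a₁ a₂ b₁ b₂ : ℝ} (ha : a₁ ≤ a₂) (hb : b₁ ≤ b₂)
    (ℓ : ℝ × ℝ → Fin 3) (hL : ∀ y ∈ Icc b₁ b₂, ℓ (a₁, y) ≠ 1)
    (hR : ∀ y ∈ Icc b₁ b₂, ℓ (a₂, y) = 1) (hB : ∀ x ∈ Icc a₁ a₂, ℓ (x, b₁) ≠ 2)
    (hT : ∀ x ∈ Icc a₁ a₂, ℓ (x, b₂) ≠ 0) {δ : ℝ} (hδ : 0 < δ) :
    ∃ q : Fin 3 → ℝ × ℝ, (∀ k, q k ∈ Icc a₁ a₂ ×ˢ Icc b₁ b₂ ∧ ℓ (q k) = k) ∧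
      ∀ k k', dist (q k) (q k') < δ := by
  obtain ⟨n, hn, hna, hnb⟩ : ∃ n : ℕ, n ≠ 0 ∧ dist a₁ a₂ / n < δ ∧ dist b₁ b₂ / n < δ :=
    ((Filter.eventually_ne_atTop 0).and
      (((tendsto_const_div_atTop_nhds_zero_nat _).eventually (gt_mem_nhds hδ)).and
        ((tendsto_const_div_atTop_nhds_zero_nat _).eventually (gt_mem_nhds hδ)))).exists
  have hx : ∀ i ≤ n, gridPoint a₁ a₂ n i ∈ Icc a₁ a₂ := fun i => gridPoint_mem_Icc ha
  have hy : ∀ j ≤ n, gridPoint b₁ b₂ n j ∈ Icc b₁ b₂ := fun j => gridPoint_mem_Icc hb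
  obtain ⟨i, hi, j, hj, hcell⟩ := exists_trichromatic_cell n n
    (fun i j => ℓ (gridPoint a₁ a₂ n i, gridPoint b₁ b₂ n j))
    (fun j hj => by simpa using hL _ (hy j hj))
    (fun j hj => by simpa [gridPoint_self _ _ hn] using hR _ (hy j hj))
    (fun i hi => by simpa using hB _ (hx i hi))
    (fun i hi => by simpa [gridPoint_self _ _ hn] using hT _ (hx i hi))
  choose i' hi' j' hj' hℓ using hcell
  refine ⟨fun k => (gridPoint a₁ a₂ n (i' k), gridPoint b₁ b₂ n (j' k)),
    fun k => ⟨⟨hx _ ((hi' k).2.trans hi), hy _ ((hj' k).2.trans hj)⟩, hℓ k⟩, fun k k' => ?_⟩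
  rw [Prod.dist_eq]
  exact max_lt ((dist_gridPoint_le _ _ _ (hi' k) (hi' k')).trans_lt hna)
    ((dist_gridPoint_le _ _ _ (hj' k) (hj' k')).trans_lt hnb)

theorem IsCompact.exists_eq_zero_of_forall_norm_le {X E : Type*} [TopologicalSpace X]
    [NormedAddCommGroup E] {K : Set X} (hK : IsCompact K) {F : X → E} (hF : ContinuousOn F K)
    (h : ∀ ε > 0, ∃ p ∈ K, ‖F p‖ ≤ ε) : ∃ p ∈ K, F p = 0 := by
  obtain ⟨q, hq, -⟩ := h 1 one_pos
  obtain ⟨p, hp, hmin⟩ := hK.exists_isMinOn ⟨q, hq⟩ hF.norm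
  refine ⟨p, hp, norm_le_zero_iff.1 (le_of_forall_pos_le_add fun ε hε => ?_)⟩
  obtain ⟨p', hp', hε'⟩ := h ε hε
  exact (hmin hp').trans (by simpa using hε')

theorem exists_norm_le_of_poincareMiranda {a₁ a₂ b₁ b₂ : ℝ} (ha : a₁ < a₂) (hb : b₁ < b₂)
    {f g : ℝ × ℝ → ℝ}
    (hf : ContinuousOn f (Icc a₁ a₂ ×ˢ Icc b₁ b₂)) (hg : ContinuousOn g (Icc a₁ a₂ ×ˢ Icc b₁ b₂))
    (hf1 : ∀ y ∈ Icc b₁ b₂, f (a₁, y) ≤ 0) (hf2 : ∀ y ∈ Icc b₁ b₂, 0 ≤ f (a₂, y))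
    (hg1 : ∀ x ∈ Icc a₁ a₂, g (x, b₁) ≤ 0) (hg2 : ∀ x ∈ Icc a₁ a₂, 0 ≤ g (x, b₂))
    {ε : ℝ} (hε : 0 < ε) : ∃ p ∈ Icc a₁ a₂ ×ˢ Icc b₁ b₂, ‖(f p, g p)‖ ≤ ε := by
  obtain ⟨δ, hδ, hclose⟩ := Metric.uniformContinuousOn_iff.1
    ((isCompact_Icc.prod isCompact_Icc).uniformContinuousOn_of_continuous (hf.prodMk hg)) ε hε
  obtain ⟨q, hq, hqδ⟩ := exists_small_trichromatic ha.le hb.le (mirandaLabel f g a₁ b₁)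
    (fun y _ => mirandaLabel_left_ne_one y) (fun y hy => mirandaLabel_right_eq_one ha hf2 hy)
    (fun x _ => mirandaLabel_bottom_ne_two x) (fun x hx => mirandaLabel_top_ne_zero hb hg2 hx) hδ
  have hf₂g₂ := nonpos_nonneg_of_mirandaLabel_eq_two hf1 (hq 2).1.2 (hq 2).2
  have hf₁ := nonneg_of_mirandaLabel_eq_one (hq 1).2
  have hg₀ := nonpos_of_mirandaLabel_eq_zero hg1 (hq 0).1.1 (hq 0).2
  have hf₂₁ := (max_lt_iff.1 (hclose _ (hq 2).1 _ (hq 1).1 (hqδ 2 1))).1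
  have hg₂₀ := (max_lt_iff.1 (hclose _ (hq 2).1 _ (hq 0).1 (hqδ 2 0))).2
  rw [Real.dist_eq, abs_lt] at hf₂₁ hg₂₀
  refine ⟨q 2, (hq 2).1, norm_prod_le_iff.2 ⟨abs_le.2 ⟨?_, ?_⟩, abs_le.2 ⟨?_, ?_⟩⟩⟩ <;> linarith

/-- Poincaré–Miranda theorem in dimension 2: if `f, g` are continuous on the rectangle
`[a₁,a₂]×[b₁,b₂]`, `f(a₁,·) ≤ 0 ≤ f(a₂,·)` and `g(·,b₁) ≤ 0 ≤ g(·,b₂)`, then there is a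
common zero of `f` and `g` in the rectangle. -/
theorem stmt11 (a₁ a₂ b₁ b₂ : ℝ) (ha : a₁ < a₂) (hb : b₁ < b₂)
    (f g : ℝ × ℝ → ℝ)
    (hf : ContinuousOn f (Set.Icc a₁ a₂ ×ˢ Set.Icc b₁ b₂))
    (hg : ContinuousOn g (Set.Icc a₁ a₂ ×ˢ Set.Icc b₁ b₂))
    (hf1 : ∀ y ∈ Set.Icc b₁ b₂, f (a₁, y) ≤ 0)
    (hf2 : ∀ y ∈ Set.Icc b₁ b₂, 0 ≤ f (a₂, y))
    (hg1 : ∀ x ∈ Set.Icc a₁ a₂, g (x, b₁) ≤ 0)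
    (hg2 : ∀ x ∈ Set.Icc a₁ a₂, 0 ≤ g (x, b₂)) :
    ∃ p ∈ Set.Icc a₁ a₂ ×ˢ Set.Icc b₁ b₂, f p = 0 ∧ g p = 0 := by
  obtain ⟨p, hp, hfg⟩ := (isCompact_Icc.prod isCompact_Icc).exists_eq_zero_of_forall_norm_le
    (hf.prodMk hg) fun ε hε => exists_norm_le_of_poincareMiranda ha hb hf hg hf1 hf2 hg1 hg2 hε
  exact ⟨p, hp, Prod.mk_eq_zero.1 hfg⟩
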